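/- Let p ≠ 3 be a prime, k ≥ 1, and θ ∈ E_p. Then the equation z = ((2θ + z)/(θ² + θz + 1))^k has a unique solution z ∈ E_p. -/

import Mathlib

/-!
For `θ, z` with `|θ - 1|, |z - 1| < 1` the denominator `θ² + θz + 1` is congruent to `3`, a unit
as `p ≠ 3`. Writing `u(z) = (2θ + z)/(θ² + θz + 1)` (`thetaMoebius θ z`), the identities
`u(z) - 1 = -(θ - 1)(z + θ - 1)/(θ² + θz + 1)` and
`u(z) - u(w) = -(θ - 1)(θ + 1)(z - w)/((θ² + θz + 1)(θ² + θw + 1))`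
show that `u` maps `E_p` into itself and contracts by `|θ - 1| ≤ 1/p`, while `x ↦ x^k` is
`1`-Lipschitz on the unit ball because `x^k - y^k = (x - y) ∑ xⁱ y^(k-1-i)`. Since `E_p` is a ball,
it is closed in the ultrametric space `ℚ_p`, and Banach's fixed point theorem applies.
-/

/-- `x ∈ E_p` : a unit with `|x - 1|_p < p^(-1/(p-1))`. -/
def IsEp (p : ℕ) [Fact p.Prime] (x : ℚ_[p]) : Prop :=
  ‖x‖ = 1 ∧ ‖x - 1‖ < (p : ℝ) ^ (-(1 : ℝ) / ((p : ℝ) - 1))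

open Metric Set Function

lemma norm_mul_lt_one {R : Type*} [SeminormedRing R] {a b : R} (ha : ‖a‖ ≤ 1) (hb : ‖b‖ < 1) :
    ‖a * b‖ < 1 :=
  (norm_mul_le a b).trans_lt (mul_lt_one_of_nonneg_of_lt_one_right ha (norm_nonneg _) hb)

namespace IsUltrametricDist

lemma norm_eq_of_norm_sub_lt {S : Type*} [SeminormedAddCommGroup S] [IsUltrametricDist S]
    {a b : S} (h : ‖b - a‖ < ‖a‖) : ‖b‖ = ‖a‖ := by
  simpa [max_eq_left h.le] using norm_add_eq_max_of_norm_ne_norm h.ne'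

lemma norm_add_lt_one {S : Type*} [SeminormedAddGroup S] [IsUltrametricDist S] {a b : S}
    (ha : ‖a‖ < 1) (hb : ‖b‖ < 1) : ‖a + b‖ < 1 :=
  (norm_add_le_max a b).trans_lt (max_lt ha hb)

lemma norm_eq_one_of_norm_sub_one_lt_one {R : Type*} [SeminormedRing R] [NormOneClass R]
    [IsUltrametricDist R] {x : R} (h : ‖x - 1‖ < 1) : ‖x‖ = 1 := by
  simpa using norm_eq_of_norm_sub_lt (a := (1 : R)) (by simpa using h)

lemma norm_pow_sub_pow_le {R : Type*} [NormedCommRing R] [NormOneClass R] [IsUltrametricDist R]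
    {x y : R} (hx : ‖x‖ ≤ 1) (hy : ‖y‖ ≤ 1) (k : ℕ) : ‖x ^ k - y ^ k‖ ≤ ‖x - y‖ := by
  have hsum : ‖∑ i ∈ Finset.range k, x ^ i * y ^ (k - 1 - i)‖ ≤ 1 := by
    refine norm_sum_le_of_forall_le_of_nonneg zero_le_one fun i _ ↦ ?_
    calc ‖x ^ i * y ^ (k - 1 - i)‖ ≤ ‖x‖ ^ i * ‖y‖ ^ (k - 1 - i) :=
          (norm_mul_le _ _).trans (mul_le_mul (_root_.norm_pow_le _ _) (_root_.norm_pow_le _ _)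
            (norm_nonneg _) (by positivity))
      _ ≤ 1 := mul_le_one₀ (pow_le_one₀ (norm_nonneg _) hx) (by positivity)
          (pow_le_one₀ (norm_nonneg _) hy)
  calc ‖x ^ k - y ^ k‖ = ‖(∑ i ∈ Finset.range k, x ^ i * y ^ (k - 1 - i)) * (x - y)‖ := by
        rw [geom_sum₂_mul]
    _ ≤ 1 * ‖x - y‖ := (norm_mul_le _ _).trans (by gcongr)
    _ = ‖x - y‖ := one_mul _

end IsUltrametricDist

theorem existsUnique_isFixedPt_of_lipschitzOnWith {α : Type*} [MetricSpace α] {f : α → α}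
    {s : Set α} {K : NNReal} (hs : IsComplete s) (hne : s.Nonempty) (hsf : MapsTo f s s)
    (hK : K < 1) (hf : LipschitzOnWith K f s) : ∃! x, x ∈ s ∧ IsFixedPt f x := by
  have hc : ContractingWith K (hsf.restrict f s s) := ⟨hK, hf.mapsToRestrict hsf⟩
  obtain ⟨x₀, hx₀⟩ := hne
  obtain ⟨x, hxs, hx, -⟩ := hc.exists_fixedPoint' hs hsf hx₀ (edist_ne_top _ _)
  refine ⟨x, ⟨hxs, hx⟩, fun y ⟨hys, hy⟩ ↦ ?_⟩
  exact congrArg Subtype.val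
    (hc.fixedPoint_unique' (x := ⟨y, hys⟩) (y := ⟨x, hxs⟩) (Subtype.ext hy) (Subtype.ext hx))

section Moebius

open IsUltrametricDist

variable {K : Type*} [NormedField K] [IsUltrametricDist K] {θ z w : K}

def thetaMoebius (θ z : K) : K := (2 * θ + z) / (θ ^ 2 + θ * z + 1)

lemma norm_thetaMoebius_denom_eq_one (h3 : ‖(3 : K)‖ = 1) (hθ : ‖θ - 1‖ < 1)
    (hz : ‖z - 1‖ < 1) : ‖θ ^ 2 + θ * z + 1‖ = 1 := by
  have hθ_le : ‖θ‖ ≤ 1 := (norm_eq_one_of_norm_sub_one_lt_one hθ).le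
  have h2 : ‖(2 : K)‖ ≤ 1 := by exact_mod_cast norm_natCast_le_one K 2
  have hclose : ‖θ ^ 2 + θ * z + 1 - 3‖ < 1 := by
    rw [show θ ^ 2 + θ * z + 1 - 3 = θ * (θ - 1) + θ * (z - 1) + 2 * (θ - 1) by ring]
    exact norm_add_lt_one (norm_add_lt_one (norm_mul_lt_one hθ_le hθ) (norm_mul_lt_one hθ_le hz))
      (norm_mul_lt_one h2 hθ)
  rw [← h3]
  exact norm_eq_of_norm_sub_lt (h3 ▸ hclose)

lemma thetaMoebius_denom_ne_zero (h3 : ‖(3 : K)‖ = 1) (hθ : ‖θ - 1‖ < 1) (hz : ‖z - 1‖ < 1) :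
    θ ^ 2 + θ * z + 1 ≠ 0 :=
  norm_ne_zero_iff.1 (by simp [norm_thetaMoebius_denom_eq_one h3 hθ hz])

lemma norm_thetaMoebius_sub_one_le (h3 : ‖(3 : K)‖ = 1) (hθ : ‖θ - 1‖ < 1)
    (hz : ‖z - 1‖ < 1) : ‖thetaMoebius θ z - 1‖ ≤ ‖θ - 1‖ := by
  have hsum : ‖z + (θ - 1)‖ ≤ 1 :=
    (norm_add_le_max _ _).trans (max_le (norm_eq_one_of_norm_sub_one_lt_one hz).le hθ.le)
  rw [thetaMoebius, div_sub_one (thetaMoebius_denom_ne_zero h3 hθ hz),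
    show 2 * θ + z - (θ ^ 2 + θ * z + 1) = -((θ - 1) * (z + (θ - 1))) by ring,
    norm_div, norm_thetaMoebius_denom_eq_one h3 hθ hz, div_one, norm_neg, norm_mul]
  exact mul_le_of_le_one_right (norm_nonneg _) hsum

lemma norm_thetaMoebius_sub_le (h3 : ‖(3 : K)‖ = 1) (hθ : ‖θ - 1‖ < 1) (hz : ‖z - 1‖ < 1)
    (hw : ‖w - 1‖ < 1) : ‖thetaMoebius θ z - thetaMoebius θ w‖ ≤ ‖θ - 1‖ * ‖z - w‖ := by
  have hθ1 : ‖θ + 1‖ ≤ 1 :=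
    (norm_add_le_max _ _).trans (max_le (norm_eq_one_of_norm_sub_one_lt_one hθ).le norm_one.le)
  rw [thetaMoebius, thetaMoebius,
    div_sub_div _ _ (thetaMoebius_denom_ne_zero h3 hθ hz) (thetaMoebius_denom_ne_zero h3 hθ hw),
    show (2 * θ + z) * (θ ^ 2 + θ * w + 1) - (θ ^ 2 + θ * z + 1) * (2 * θ + w)
      = -((θ - 1) * (θ + 1) * (z - w)) by ring,
    norm_div, norm_mul, norm_thetaMoebius_denom_eq_one h3 hθ hz,
    norm_thetaMoebius_denom_eq_one h3 hθ hw, mul_one, div_one, norm_neg, norm_mul, norm_mul,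
    mul_right_comm]
  exact mul_le_of_le_one_right (by positivity) hθ1

lemma norm_thetaMoebius_le_one (h3 : ‖(3 : K)‖ = 1) (hθ : ‖θ - 1‖ < 1) (hz : ‖z - 1‖ < 1) :
    ‖thetaMoebius θ z‖ ≤ 1 :=
  (norm_eq_one_of_norm_sub_one_lt_one
    ((norm_thetaMoebius_sub_one_le h3 hθ hz).trans_lt hθ)).le

lemma norm_thetaMoebius_pow_sub_one_le (h3 : ‖(3 : K)‖ = 1) (hθ : ‖θ - 1‖ < 1)
    (hz : ‖z - 1‖ < 1) (k : ℕ) : ‖thetaMoebius θ z ^ k - 1‖ ≤ ‖θ - 1‖ := by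
  simpa using (norm_pow_sub_pow_le (norm_thetaMoebius_le_one h3 hθ hz) norm_one.le k).trans
    (norm_thetaMoebius_sub_one_le h3 hθ hz)

lemma norm_thetaMoebius_pow_sub_le (h3 : ‖(3 : K)‖ = 1) (hθ : ‖θ - 1‖ < 1) (hz : ‖z - 1‖ < 1)
    (hw : ‖w - 1‖ < 1) (k : ℕ) :
    ‖thetaMoebius θ z ^ k - thetaMoebius θ w ^ k‖ ≤ ‖θ - 1‖ * ‖z - w‖ :=
  (norm_pow_sub_pow_le (norm_thetaMoebius_le_one h3 hθ hz)
    (norm_thetaMoebius_le_one h3 hθ hw) k).trans (norm_thetaMoebius_sub_le h3 hθ hz hw)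

end Moebius

section Ep

variable {p : ℕ} [Fact p.Prime] {x : ℚ_[p]}

lemma one_lt_natCast_prime : (1 : ℝ) < p := by exact_mod_cast (Fact.out : p.Prime).one_lt

lemma rpow_neg_one_div_sub_one_le_one : (p : ℝ) ^ (-(1 : ℝ) / ((p : ℝ) - 1)) ≤ 1 :=
  Real.rpow_le_one_of_one_le_of_nonpos one_lt_natCast_prime.le
    (div_nonpos_of_nonpos_of_nonneg (by norm_num) (by linarith [one_lt_natCast_prime (p := p)]))

lemma isEp_iff_norm_sub_one_lt :
    IsEp p x ↔ ‖x - 1‖ < (p : ℝ) ^ (-(1 : ℝ) / ((p : ℝ) - 1)) :=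
  ⟨And.right, fun h ↦ ⟨IsUltrametricDist.norm_eq_one_of_norm_sub_one_lt_one
    (h.trans_le rpow_neg_one_div_sub_one_le_one), h⟩⟩

lemma IsEp.norm_sub_one_lt_one (hx : IsEp p x) : ‖x - 1‖ < 1 :=
  hx.2.trans_le rpow_neg_one_div_sub_one_le_one

lemma IsEp.norm_sub_one_le_inv (hx : IsEp p x) : ‖x - 1‖ ≤ (p : ℝ)⁻¹ := by
  simpa using (Padic.norm_le_pow_iff_norm_lt_pow_add_one (x - 1) (-1)).2
    (by simpa using hx.norm_sub_one_lt_one)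

lemma isEp_one : IsEp p 1 := by
  rw [isEp_iff_norm_sub_one_lt, sub_self, norm_zero]
  exact Real.rpow_pos_of_pos (zero_lt_one.trans one_lt_natCast_prime) _

lemma isComplete_setOf_isEp : IsComplete {x : ℚ_[p] | IsEp p x} := by
  have hball : {x : ℚ_[p] | IsEp p x} = ball 1 ((p : ℝ) ^ (-(1 : ℝ) / ((p : ℝ) - 1))) := by
    ext x
    rw [mem_ofPred_eq, isEp_iff_norm_sub_one_lt, mem_ball, dist_eq_norm]
  rw [hball]
  exact (IsUltrametricDist.isClosed_ball _ _).isComplete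

lemma Padic.norm_three_eq_one (hp3 : p ≠ 3) : ‖(3 : ℚ_[p])‖ = 1 := by
  have : p.Coprime 3 :=
    (Nat.coprime_primes (Fact.out : p.Prime) Nat.prime_three).2 hp3
  exact_mod_cast Padic.norm_natCast_eq_one_iff.2 this

end Ep

theorem unique_fixed_point_general (p : ℕ) [Fact p.Prime] (hp3 : p ≠ 3) (k : ℕ)
    (θ : ℚ_[p]) (hθ : IsEp p θ) :
    ∃! z : ℚ_[p], IsEp p z ∧ z = ((2 * θ + z) / (θ ^ 2 + θ * z + 1)) ^ k := by
  have h3 := Padic.norm_three_eq_one hp3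
  have hmaps : MapsTo (fun z ↦ thetaMoebius θ z ^ k) {z | IsEp p z} {z | IsEp p z} :=
    fun z hz ↦ isEp_iff_norm_sub_one_lt.2 <| (norm_thetaMoebius_pow_sub_one_le h3
      hθ.norm_sub_one_lt_one hz.norm_sub_one_lt_one k).trans_lt hθ.2
  have hlip : LipschitzOnWith (p : NNReal)⁻¹ (fun z ↦ thetaMoebius θ z ^ k) {z | IsEp p z} := by
    refine LipschitzOnWith.of_dist_le_mul fun z hz w hw ↦ ?_
    rw [dist_eq_norm, dist_eq_norm, NNReal.coe_inv, NNReal.coe_natCast]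
    exact (norm_thetaMoebius_pow_sub_le h3 hθ.norm_sub_one_lt_one hz.norm_sub_one_lt_one
      hw.norm_sub_one_lt_one k).trans (by gcongr; exact hθ.norm_sub_one_le_inv)
  have hK : (p : NNReal)⁻¹ < 1 := inv_lt_one_of_one_lt₀ (by exact_mod_cast one_lt_natCast_prime)
  obtain ⟨z, ⟨hz, hfix⟩, huniq⟩ :=
    existsUnique_isFixedPt_of_lipschitzOnWith isComplete_setOf_isEp ⟨1, isEp_one⟩ hmaps hK hlip
  exact ⟨z, ⟨hz, hfix.symm⟩, fun y ⟨hy, hy'⟩ ↦ huniq y ⟨hy, hy'.symm⟩⟩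

theorem unique_fixed_point (p : ℕ) [Fact p.Prime] (hp3 : p ≠ 3) (k : ℕ) (hk : 1 ≤ k)
    (θ : ℚ_[p]) (hθ : IsEp p θ) :
    ∃! z : ℚ_[p], IsEp p z ∧ z = ((2 * θ + z) / (θ ^ 2 + θ * z + 1)) ^ k :=
  unique_fixed_point_general p hp3 k θ hθ
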